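/- Given the image function (Mf)(ε) := inf { f(x) : Mx = ε } for f: ℝⁿ → ℝ̄ and M ∈ ℝ^{m×n}, the proximal mapping of φ(μ) := (Mf)(μ + c) satisfies: prox_{γφ}(ζ) = M·argmin_w { f(w) + (1/(2γ))‖Mw − c − ζ‖² } − c, whenever the inner argmin exists and the infimum in the image function is attained. -/

import Mathlib

open Set

/-- `sInf (f '' (A ⁻¹' {y}))` is the image function `(A f) y`; the penalty `g (A x)` is constant
on each fibre of `A`, so minimizing over `x` and then projecting minimizes over `y`. -/
theorem isMinOn_sInf_image_preimage_add {X Y : Type*} (f : X → EReal) (A : X → Y)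
    (g : Y → ℝ) {w : X} (hw : IsMinOn (fun x => f x + g (A x)) univ w) :
    IsMinOn (fun y => sInf (f '' (A ⁻¹' {y})) + g y) univ (A w) := by
  intro y _
  have hfw : sInf (f '' (A ⁻¹' {A w})) ≤ f w := sInf_le ⟨w, rfl, rfl⟩
  have hinf : f w + g (A w) ≤ sInf (f '' (A ⁻¹' {y})) + g y := by
    rw [← EReal.sub_le_iff_le_add (.inl (EReal.coe_ne_bot _)) (.inl (EReal.coe_ne_top _))]
    refine le_sInf ?_
    rintro _ ⟨x, rfl, rfl⟩
    rw [EReal.sub_le_iff_le_add (.inl (EReal.coe_ne_bot _)) (.inl (EReal.coe_ne_top _))]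
    exact hw (mem_univ x)
  exact (add_le_add_left hfw _).trans hinf

theorem stmt_8_general {m nn : ℕ} (f : EuclideanSpace ℝ (Fin nn) → EReal)
    (A : EuclideanSpace ℝ (Fin nn) →ₗ[ℝ] EuclideanSpace ℝ (Fin m))
    (c ζ : EuclideanSpace ℝ (Fin m)) (γ : ℝ)
    (φ : EuclideanSpace ℝ (Fin m) → EReal)
    (hφ : ∀ μ, φ μ = sInf (f '' {x | A x = μ + c}))
    (wstar : EuclideanSpace ℝ (Fin nn))
    -- the inner argmin exists (is attained at `wstar`):
    (hmin : IsMinOn (fun w => f w + ((1 / (2 * γ)) * ‖A w - c - ζ‖ ^ 2 : ℝ))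
      Set.univ wstar) :
    IsMinOn (fun μ => φ μ + ((1 / (2 * γ)) * ‖μ - ζ‖ ^ 2 : ℝ)) Set.univ
      (A wstar - c) := by
  have hA := isMinOn_sInf_image_preimage_add f A (fun y => (1 / (2 * γ)) * ‖y - c - ζ‖ ^ 2) hmin
  intro μ _
  simpa [hφ, Set.preimage, eq_comm] using hA (mem_univ (μ + c))

/-- For the image function `(Mf)(ε) = inf { f x | M x = ε }` and
`φ(μ) = (Mf)(μ + c)`, the proximal mapping satisfies
`prox_{γφ}(ζ) = M ⬝ argmin_w { f w + (1/(2γ))‖Mw - c - ζ‖² } - c`,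
whenever the inner argmin exists and the infimum in the image function
is attained. -/
theorem stmt_8 {m nn : ℕ} (f : EuclideanSpace ℝ (Fin nn) → EReal)
    (A : EuclideanSpace ℝ (Fin nn) →ₗ[ℝ] EuclideanSpace ℝ (Fin m))
    (c ζ : EuclideanSpace ℝ (Fin m)) (γ : ℝ) (hγ : 0 < γ)
    (φ : EuclideanSpace ℝ (Fin m) → EReal)
    (hφ : ∀ μ, φ μ = sInf (f '' {x | A x = μ + c}))
    -- the infimum defining the image function is attained:
    (hatt : ∀ x : EuclideanSpace ℝ (Fin nn), ∃ x', A x' = A x ∧ f x' = φ (A x - c))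
    (wstar : EuclideanSpace ℝ (Fin nn))
    -- the inner argmin exists (is attained at `wstar`):
    (hmin : IsMinOn (fun w => f w + ((1 / (2 * γ)) * ‖A w - c - ζ‖ ^ 2 : ℝ))
      Set.univ wstar) :
    IsMinOn (fun μ => φ μ + ((1 / (2 * γ)) * ‖μ - ζ‖ ^ 2 : ℝ)) Set.univ
      (A wstar - c) :=
  stmt_8_general f A c ζ γ φ hφ wstar hmin
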